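/- Any transitive subgroup of S_7 isomorphic to a subgroup of PSL(3,2) (equivalently, any transitive subgroup of order dividing 168 acting on 7 points) that contains an element of order 4 has order 168; in particular, a transitive subgroup of PSL(3,2) in its action on 7 points containing an element of order 4 is all of PSL(3,2). -/

import Mathlib

open Equiv Subgroup

private lemma cardSL168 : Nat.card (Matrix.SpecialLinearGroup (Fin 3) (ZMod 2)) = 168 := by
  have hu : ∀ u : (ZMod 2)ˣ, (u : ZMod 2) = 1 := by decide
  have hbij : Function.Bijective (Matrix.SpecialLinearGroup.toGL :
      Matrix.SpecialLinearGroup (Fin 3) (ZMod 2) → GL (Fin 3) (ZMod 2)) := by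
    constructor
    · intro A B h
      ext i j
      have := congrArg (fun M : GL (Fin 3) (ZMod 2) => (M : Matrix (Fin 3) (Fin 3) (ZMod 2)) i j) h
      simpa using this
    · intro M
      have hdet : (M : Matrix (Fin 3) (Fin 3) (ZMod 2)).det = 1 := by
        have := hu (Matrix.GeneralLinearGroup.det M)
        simpa using this
      refine ⟨⟨(M : Matrix (Fin 3) (Fin 3) (ZMod 2)), hdet⟩, ?_⟩
      apply Units.ext
      rfl
  rw [Nat.card_congr (Equiv.ofBijective _ hbij), Matrix.card_GL_field]
  decide

lemma cyc7 (σ : Equiv.Perm (Fin 7)) (hσ : orderOf σ = 7) (x y : Fin 7) :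
    ∃ k : ℤ, (σ ^ k) x = y := by
  have h1 : Nat.Prime (orderOf σ) := by rw [hσ]; norm_num
  have h2 : Fintype.card (Fin 7) < 2 * orderOf σ := by rw [hσ]; simp
  have hc : σ.IsCycle := Equiv.Perm.isCycle_of_prime_order' h1 h2
  have hsupp : σ.support.card = 7 := by
    have := hc.orderOf
    omega
  have hall : ∀ z : Fin 7, σ z ≠ z := by
    intro z
    have hu : σ.support = Finset.univ := Finset.eq_univ_of_card _ (by simp [hsupp])
    have : z ∈ σ.support := by simp [hu]
    simpa [Equiv.Perm.mem_support] using this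
  obtain ⟨a, ha1, ha⟩ := hc
  exact ((ha (hall x)).symm.trans (ha (hall y)))

lemma cent7 (σ : Equiv.Perm (Fin 7)) (hσ : orderOf σ = 7) :
    Nat.card (Subgroup.centralizer {σ} : Subgroup (Equiv.Perm (Fin 7))) = 7 := by
  have hinj : Function.Injective
      (fun τ : Subgroup.centralizer ({σ} : Set (Equiv.Perm (Fin 7))) => (τ : Equiv.Perm (Fin 7)) 0) := by
    rintro ⟨τ, hτ⟩ ⟨τ', hτ'⟩ h
    simp only at h
    have hτc : Commute σ τ := Subgroup.mem_centralizer_iff.mp hτ σ rfl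
    have hτ'c : Commute σ τ' := Subgroup.mem_centralizer_iff.mp hτ' σ rfl
    have key : ∀ ρ : Equiv.Perm (Fin 7), Commute σ ρ → ∀ k : ℤ, ρ ((σ ^ k) 0) = (σ ^ k) (ρ 0) := by
      intro ρ hρ k
      have h2 : ρ * σ ^ k = σ ^ k * ρ := ((hρ.zpow_left k).eq).symm
      calc ρ ((σ ^ k) 0) = (ρ * σ ^ k) 0 := rfl
        _ = (σ ^ k * ρ) 0 := by rw [h2]
        _ = (σ ^ k) (ρ 0) := rfl
    have : τ = τ' := by
      ext x
      obtain ⟨k, hk⟩ := cyc7 σ hσ 0 x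
      rw [← hk, key τ hτc k, key τ' hτ'c k, h]
    simp [this]
  have hle : Nat.card (Subgroup.centralizer ({σ} : Set (Equiv.Perm (Fin 7)))) ≤ 7 := by
    have := Nat.card_le_card_of_injective _ hinj
    simpa using this
  have hdvd : 7 ∣ Nat.card (Subgroup.centralizer ({σ} : Set (Equiv.Perm (Fin 7)))) := by
    have hz : Subgroup.zpowers σ ≤ Subgroup.centralizer {σ} := by
      rw [Subgroup.zpowers_le]
      exact Subgroup.mem_centralizer_iff.mpr (by rintro g rfl; rfl)
    have := Subgroup.card_dvd_of_le hz
    rwa [Nat.card_zpowers, hσ] at this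
  have hpos : 0 < Nat.card (Subgroup.centralizer ({σ} : Set (Equiv.Perm (Fin 7)))) := Nat.card_pos
  omega
  -- 7 ∣ n, n ≤ 7, n > 0 → n = 7

lemma fact_eq {n p k : ℕ} (hp : Nat.Prime p) (hn : n ≠ 0) (h1 : p ^ k ∣ n)
    (h2 : ¬ p ^ (k+1) ∣ n) : n.factorization p = k := by
  have a := (hp.pow_dvd_iff_le_factorization hn).mp h1
  have b : ¬ (k + 1 ≤ n.factorization p) :=
    fun h => h2 ((hp.pow_dvd_iff_le_factorization hn).mpr h)
  omega

lemma sylow7_card (H : Subgroup (Equiv.Perm (Fin 7))) (hdvd : Nat.card H ∣ 168)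
    (h7 : 7 ∣ Nat.card H) (P : Sylow 7 ↥H) : Nat.card ↥(P : Subgroup ↥H) = 7 := by
  haveI : Fact (Nat.Prime 7) := ⟨by norm_num⟩
  rw [Sylow.card_eq_multiplicity P,
    fact_eq (k := 1) (by norm_num) (Nat.card_pos (α := ↥H)).ne'
      (by rw [pow_one]; exact h7)
      (fun h => by have := h.trans hdvd; norm_num at this),
    pow_one]

lemma norm_bound (H : Subgroup (Equiv.Perm (Fin 7))) (hdvd : Nat.card H ∣ 168)
    (h7 : 7 ∣ Nat.card H) (P : Sylow 7 ↥H) :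
    ∃ a b : ℕ, a ∣ 7 ∧ b ∣ 6 ∧ Nat.card ↥((Subgroup.normalizer ((P : Subgroup ↥H) : Set ↥H))) = a * b := by
  haveI : Fact (Nat.Prime 7) := ⟨by norm_num⟩
  have hcardP : Nat.card ↥(P : Subgroup ↥H) = 7 := sylow7_card H hdvd h7 P
  haveI : IsCyclic ↥(P : Subgroup ↥H) := isCyclic_of_prime_card hcardP
  obtain ⟨s, hs⟩ := IsCyclic.exists_generator (α := ↥(P : Subgroup ↥H))
  have hords : orderOf s = 7 := by rw [orderOf_eq_card_of_forall_mem_zpowers hs, hcardP]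
  have hordt : orderOf ((s : ↥H)) = 7 :=
    (orderOf_injective (P : Subgroup ↥H).subtype (Subgroup.subtype_injective _) s).trans hords
  have hordσ : orderOf (((s : ↥H) : Equiv.Perm (Fin 7))) = 7 :=
    (orderOf_injective H.subtype (Subgroup.subtype_injective _) (s : ↥H)).trans hordt
  haveI : ((P : Subgroup ↥H).subgroupOf (Subgroup.normalizer ((P : Subgroup ↥H) : Set ↥H))).Normal :=
    Subgroup.normal_in_normalizer
  let j : ↥(Subgroup.normalizer ((P : Subgroup ↥H) : Set ↥H)) →*
      MulAut ↥((P : Subgroup ↥H).subgroupOf (Subgroup.normalizer ((P : Subgroup ↥H) : Set ↥H))) := MulAut.conjNormal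
  have hKcard : Nat.card ↥(Subgroup.normalizer ((P : Subgroup ↥H) : Set ↥H)) =
      Nat.card j.range * Nat.card j.ker := by
    rw [Subgroup.card_eq_card_quotient_mul_card_subgroup j.ker,
      Nat.card_congr (QuotientGroup.quotientKerEquivRange j).toEquiv]
  have hPK : Nat.card ↥((P : Subgroup ↥H).subgroupOf (Subgroup.normalizer ((P : Subgroup ↥H) : Set ↥H))) = 7 := by
    rw [Nat.card_congr (Subgroup.subgroupOfEquivOfLe Subgroup.le_normalizer).toEquiv, hcardP]
  haveI : Finite (MulAut ↥((P : Subgroup ↥H).subgroupOf (Subgroup.normalizer ((P : Subgroup ↥H) : Set ↥H)))) :=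
    Finite.of_injective (fun e => (e : ↥((P : Subgroup ↥H).subgroupOf (Subgroup.normalizer ((P : Subgroup ↥H) : Set ↥H)))
      → ↥((P : Subgroup ↥H).subgroupOf (Subgroup.normalizer ((P : Subgroup ↥H) : Set ↥H))))) DFunLike.coe_injective
  have hb : Nat.card j.range ∣ 6 := by
    have h1 := Subgroup.card_subgroup_dvd_card j.range
    haveI : IsCyclic ↥((P : Subgroup ↥H).subgroupOf (Subgroup.normalizer ((P : Subgroup ↥H) : Set ↥H))) :=
      isCyclic_of_prime_card hPK
    rwa [IsCyclic.card_mulAut, hPK, (by decide : Nat.totient 7 = 6)] at h1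
  have ha : Nat.card j.ker ∣ 7 := by
    let f : ↥j.ker →* Equiv.Perm (Fin 7) :=
      H.subtype.comp ((Subgroup.normalizer ((P : Subgroup ↥H) : Set ↥H)).subtype.comp j.ker.subtype)
    have hfinj : Function.Injective f :=
      fun a b h => Subtype.ext (Subtype.ext (Subtype.ext h))
    have hrange : f.range ≤ Subgroup.centralizer {((s : ↥H) : Equiv.Perm (Fin 7))} := by
      rintro - ⟨x, rfl⟩
      rw [Subgroup.mem_centralizer_iff]
      rintro g rfl
      have htK : (s : ↥H) ∈ (Subgroup.normalizer ((P : Subgroup ↥H) : Set ↥H)) :=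
        Subgroup.le_normalizer (SetLike.coe_mem s)
      have hx := x.2
      rw [MonoidHom.mem_ker] at hx
      have h0mem : (⟨(s : ↥H), htK⟩ : ↥(Subgroup.normalizer ((P : Subgroup ↥H) : Set ↥H))) ∈
          (P : Subgroup ↥H).subgroupOf (Subgroup.normalizer ((P : Subgroup ↥H) : Set ↥H)) := by
        rw [Subgroup.mem_subgroupOf]; exact SetLike.coe_mem s
      have key := congrArg (fun e : MulAut ↥((P : Subgroup ↥H).subgroupOf
          (Subgroup.normalizer ((P : Subgroup ↥H) : Set ↥H))) => (((e ⟨⟨(s : ↥H), htK⟩, h0mem⟩ :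
          ↥(Subgroup.normalizer ((P : Subgroup ↥H) : Set ↥H))) : ↥H))) hx
      simp only [j, MulAut.conjNormal_apply, MulAut.one_apply] at key
      -- key : x * s * x⁻¹ = s in ↥H (coerced)
      have hcomm : ((x : ↥(Subgroup.normalizer ((P : Subgroup ↥H) : Set ↥H))) : ↥H) * (s : ↥H)
          * (((x : ↥(Subgroup.normalizer ((P : Subgroup ↥H) : Set ↥H))) : ↥H))⁻¹ = (s : ↥H) := by
        simpa using key
      have hc2 := mul_inv_eq_iff_eq_mul.mp hcomm
      have := congrArg H.subtype hc2
      simp only [map_mul] at this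
      exact this.symm
    have hdvd2 := Subgroup.card_dvd_of_le hrange
    rw [cent7 _ hordσ] at hdvd2
    have hcardeq : Nat.card ↥j.ker = Nat.card f.range :=
      Nat.card_congr (MonoidHom.ofInjective hfinj).toEquiv
    rw [hcardeq]; exact hdvd2
  exact ⟨Nat.card j.ker, Nat.card j.range, ha, hb, by rw [hKcard, mul_comm]⟩

-- a nontrivial normal 2-subgroup of a transitive subgroup of S7 is impossible
lemma fixed_pt (H : Subgroup (Equiv.Perm (Fin 7)))
    (htrans : ∀ x y : Fin 7, ∃ h ∈ H, h x = y)
    (Q : Subgroup ↥H) (hQn : Q.Normal) (hQ8 : Nat.card Q = 8) : False := by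
  haveI : Fact (Nat.Prime 2) := ⟨by norm_num⟩
  have hpg : IsPGroup 2 ↥Q := IsPGroup.of_card (n := 3) (by rw [hQ8]; norm_num)
  obtain ⟨x₀, hx₀⟩ := hpg.nonempty_fixed_point_of_prime_not_dvd_card (Fin 7)
    (by simp [Nat.card_eq_fintype_card])
  have hfix : ∀ (q : ↥H), q ∈ Q → ∀ y : Fin 7, (q : Equiv.Perm (Fin 7)) y = y := by
    intro q hq y
    obtain ⟨h, hh, hhy⟩ := htrans x₀ y
    have hq' : (⟨h, hh⟩ : ↥H)⁻¹ * q * ⟨h, hh⟩ ∈ Q := by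
      simpa using hQn.conj_mem q hq (⟨h, hh⟩ : ↥H)⁻¹
    have := hx₀ ⟨_, hq'⟩
    -- this : (⟨h⟩⁻¹ * q * ⟨h⟩) • x₀ = x₀
    have h2 : ((⟨h, hh⟩ : ↥H)⁻¹ * q * ⟨h, hh⟩ : ↥H).1 x₀ = x₀ := this
    have h3 : (h⁻¹ * (q : Equiv.Perm (Fin 7)) * h) x₀ = x₀ := h2
    calc (q : Equiv.Perm (Fin 7)) y = (q : Equiv.Perm (Fin 7)) (h x₀) := by rw [hhy]
      _ = h ((h⁻¹ * (q : Equiv.Perm (Fin 7)) * h) x₀) := by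
          simp [Equiv.Perm.mul_apply]
      _ = h x₀ := by rw [h3]
      _ = y := hhy
  have : Q = ⊥ := by
    rw [eq_bot_iff]
    intro q hq
    have : (q : Equiv.Perm (Fin 7)) = 1 := Equiv.ext (fun y => hfix q hq y)
    have : q = 1 := Subtype.ext this
    simp [this]
  rw [this] at hQ8
  simp at hQ8

lemma psl_sub_eq {G : Type*} [Group G] [Finite G] {A B : Subgroup G} (hle : A ≤ B)
    (hc : Nat.card B ≤ Nat.card A) : A = B := by
  have h1 : Nat.card (A.subgroupOf B) = Nat.card A :=
    Nat.card_congr (Subgroup.subgroupOfEquivOfLe hle).toEquiv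
  have h2 : A.subgroupOf B = ⊤ := by
    apply Subgroup.eq_top_of_card_eq
    have := Subgroup.card_le_card_group (A.subgroupOf B)
    omega
  exact le_antisymm hle (Subgroup.subgroupOf_eq_top.mp h2)

lemma no56 (H : Subgroup (Equiv.Perm (Fin 7))) (hdvd : Nat.card H ∣ 168)
    (h56 : Nat.card H = 56)
    (htrans : ∀ x y : Fin 7, ∃ h ∈ H, h x = y) : False := by
  classical
  haveI : Fact (Nat.Prime 7) := ⟨by norm_num⟩
  haveI : Fact (Nat.Prime 2) := ⟨by norm_num⟩
  have h7 : 7 ∣ Nat.card H := by rw [h56]; norm_num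
  -- number of Sylow 7-subgroups is 8
  obtain ⟨P⟩ : Nonempty (Sylow 7 ↥H) := inferInstance
  have hn7 : Nat.card (Sylow 7 ↥H) = 8 := by
    obtain ⟨a, b, ha, hb, hK⟩ := norm_bound H hdvd h7 P
    have h1 : Nat.card (Sylow 7 ↥H) = (Subgroup.normalizer ((P : Subgroup ↥H) : Set ↥H)).index :=
      Sylow.card_eq_index_normalizer P
    have h2 := Subgroup.index_mul_card (Subgroup.normalizer ((P : Subgroup ↥H) : Set ↥H))
    rw [h56, hK, ← h1] at h2
    have h3 : Nat.card (Sylow 7 ↥H) % 7 = 1 % 7 := card_sylow_modEq_one 7 ↥H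
    have hbpos : 0 < b := Nat.pos_of_dvd_of_pos hb (by norm_num)
    have hb6 : b ≤ 6 := Nat.le_of_dvd (by norm_num) hb
    rcases (Nat.Prime.eq_one_or_self_of_dvd (by norm_num : Nat.Prime 7) a ha) with rfl | rfl
    · interval_cases b <;> omega
    · interval_cases b <;> omega
  -- every Sylow 7 has 6 nontrivial elements, each of order 7
  haveI : Fintype ↥H := Fintype.ofFinite _
  haveI : Fintype (Sylow 7 ↥H) := Fintype.ofFinite _
  have hcard7 : ∀ R : Sylow 7 ↥H, Nat.card ↥(R : Subgroup ↥H) = 7 :=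
    fun R => sylow7_card H hdvd h7 R
  have huniq : ∀ (R S : Sylow 7 ↥H) (x : ↥H), x ∈ (R : Subgroup ↥H) → x ∈ (S : Subgroup ↥H)
      → x ≠ 1 → R = S := by
    intro R S x hxR hxS hx1
    have hord : orderOf x = 7 := by
      have hdvd7 : orderOf x ∣ 7 := by
        have hd := orderOf_dvd_natCard (⟨x, hxR⟩ : ↥(R : Subgroup ↥H))
        rw [hcard7 R] at hd
        have heq := orderOf_injective (R : Subgroup ↥H).subtype
          (Subgroup.subtype_injective _) ⟨x, hxR⟩
        exact dvd_trans (dvd_of_eq heq) hd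
      rcases (Nat.Prime.eq_one_or_self_of_dvd (by norm_num) _ hdvd7) with h | h
      · exact absurd (orderOf_eq_one_iff.mp h) hx1
      · exact h
    have hzR : Subgroup.zpowers x = (R : Subgroup ↥H) := by
      apply psl_sub_eq (Subgroup.zpowers_le.mpr hxR)
      rw [hcard7 R, Nat.card_zpowers, hord]
    have hzS : Subgroup.zpowers x = (S : Subgroup ↥H) := by
      apply psl_sub_eq (Subgroup.zpowers_le.mpr hxS)
      rw [hcard7 S, Nat.card_zpowers, hord]
    exact Sylow.ext (hzR ▸ hzS)
  -- counting
  let T : Finset ↥H := Finset.univ.biUnion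
    (fun R : Sylow 7 ↥H => Finset.univ.filter (fun x => x ∈ (R : Subgroup ↥H) ∧ x ≠ 1))
  have hTcard : T.card = 48 := by
    have hdisj : ∀ R ∈ (Finset.univ : Finset (Sylow 7 ↥H)), ∀ S ∈ Finset.univ, R ≠ S →
        Disjoint (Finset.univ.filter (fun x => x ∈ (R : Subgroup ↥H) ∧ x ≠ 1))
          (Finset.univ.filter (fun x => x ∈ (S : Subgroup ↥H) ∧ x ≠ 1)) := by
      intro R _ S _ hRS
      rw [Finset.disjoint_left]
      intro x hxR hxS
      simp only [Finset.mem_filter] at hxR hxS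
      exact hRS (huniq R S x hxR.2.1 hxS.2.1 hxR.2.2)
    rw [Finset.card_biUnion hdisj]
    have hone : ∀ R : Sylow 7 ↥H,
        (Finset.univ.filter (fun x => x ∈ (R : Subgroup ↥H) ∧ x ≠ 1)).card = 6 := by
      intro R
      have e1 : (Finset.univ.filter (fun x => x ∈ (R : Subgroup ↥H) ∧ x ≠ 1))
          = (Finset.univ.filter (fun x => x ∈ (R : Subgroup ↥H))).erase 1 := by
        ext x
        simp [Finset.mem_erase, and_comm]
      rw [e1, Finset.card_erase_of_mem (by simp [Subgroup.one_mem])]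
      have e2 : (Finset.univ.filter (fun x => x ∈ (R : Subgroup ↥H))).card = 7 := by
        rw [← Fintype.card_subtype, ← Nat.card_eq_fintype_card]
        exact hcard7 R
      omega
    rw [Finset.sum_congr rfl (fun R _ => hone R), Finset.sum_const, Finset.card_univ,
      ← Nat.card_eq_fintype_card, hn7]
    norm_num
  let B : Finset ↥H := Finset.univ.filter (fun x => x ^ 8 = 1)
  have hTB : Disjoint T B := by
    rw [Finset.disjoint_left]
    intro x hxT hxB
    simp only [T, Finset.mem_biUnion, Finset.mem_filter] at hxT
    obtain ⟨R, -, -, hxR, hx1⟩ := hxT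
    simp only [B, Finset.mem_filter] at hxB
    have hord : orderOf x = 7 := by
      have hdvd7 : orderOf x ∣ 7 := by
        have hd := orderOf_dvd_natCard (⟨x, hxR⟩ : ↥(R : Subgroup ↥H))
        rw [hcard7 R] at hd
        have heq := orderOf_injective (R : Subgroup ↥H).subtype
          (Subgroup.subtype_injective _) ⟨x, hxR⟩
        exact dvd_trans (dvd_of_eq heq) hd
      rcases (Nat.Prime.eq_one_or_self_of_dvd (by norm_num) _ hdvd7) with h | h
      · exact absurd (orderOf_eq_one_iff.mp h) hx1
      · exact h
    have : x ^ 8 = x := by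
      have h7' := pow_orderOf_eq_one x
      rw [hord] at h7'
      calc x ^ 8 = x ^ 7 * x := pow_succ x 7
        _ = x := by rw [h7', one_mul]
    rw [this] at hxB
    exact hx1 hxB.2
  have hBcard : B.card ≤ 8 := by
    have := Finset.card_le_univ (T ∪ B)
    rw [Finset.card_union_of_disjoint hTB] at this
    have : T.card + B.card ≤ 56 := by
      rw [← h56, Nat.card_eq_fintype_card, ← Finset.card_univ]; exact this
    omega
  -- Sylow 2-subgroups all coincide
  have hQ8 : ∀ Q : Sylow 2 ↥H, Nat.card ↥(Q : Subgroup ↥H) = 8 := by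
    intro Q
    rw [Sylow.card_eq_multiplicity Q, h56,
      fact_eq (k := 3) (by norm_num) (by norm_num) (by norm_num) (by norm_num)]
    norm_num
  have hQB : ∀ Q : Sylow 2 ↥H, Finset.univ.filter (fun x => x ∈ (Q : Subgroup ↥H)) = B := by
    intro Q
    have hsub : Finset.univ.filter (fun x => x ∈ (Q : Subgroup ↥H)) ⊆ B := by
      intro x hx
      simp only [Finset.mem_filter] at hx
      simp only [B, Finset.mem_filter]
      refine ⟨Finset.mem_univ x, ?_⟩
      have : (⟨x, hx.2⟩ : ↥(Q : Subgroup ↥H)) ^ 8 = 1 := by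
        rw [← hQ8 Q]; exact pow_card_eq_one'
      have := congrArg (fun z : ↥(Q : Subgroup ↥H) => (z : ↥H)) this
      simpa using this
    have hcardQ : (Finset.univ.filter (fun x => x ∈ (Q : Subgroup ↥H))).card = 8 := by
      rw [← Fintype.card_subtype, ← Nat.card_eq_fintype_card]
      exact hQ8 Q
    exact Finset.eq_of_subset_of_card_le hsub (by omega)
  obtain ⟨Q⟩ : Nonempty (Sylow 2 ↥H) := inferInstance
  have huniq2 : ∀ R : Sylow 2 ↥H, R = Q := by
    intro R
    apply Sylow.ext
    ext x
    have h1 := hQB R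
    have h2 := hQB Q
    constructor
    · intro hx
      have : x ∈ Finset.univ.filter (fun y => y ∈ (R : Subgroup ↥H)) := by simp [hx]
      rw [h1, ← h2] at this
      simpa using this
    · intro hx
      have : x ∈ Finset.univ.filter (fun y => y ∈ (Q : Subgroup ↥H)) := by simp [hx]
      rw [h2, ← h1] at this
      simpa using this
  have hnormal : (Q : Subgroup ↥H).Normal := by
    rw [← Subgroup.normalizer_eq_top_iff]
    rw [eq_top_iff']
    intro g
    exact Sylow.smul_eq_iff_mem_normalizer.mp (huniq2 (g • Q))
  exact fixed_pt H htrans (Q : Subgroup ↥H) hnormal (hQ8 Q)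


lemma no2884 (H : Subgroup (Equiv.Perm (Fin 7))) (hdvd : Nat.card H ∣ 168)
    (hm : Nat.card H = 28 ∨ Nat.card H = 84) : False := by
  haveI : Fact (Nat.Prime 7) := ⟨by norm_num⟩
  have h7 : 7 ∣ Nat.card H := by rcases hm with h | h <;> rw [h] <;> norm_num
  obtain ⟨P⟩ : Nonempty (Sylow 7 ↥H) := inferInstance
  obtain ⟨a, b, ha, hb, hK⟩ := norm_bound H hdvd h7 P
  have h1 : Nat.card (Sylow 7 ↥H) = (Subgroup.normalizer ((P : Subgroup ↥H) : Set ↥H)).index :=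
    Sylow.card_eq_index_normalizer P
  have h2 := Subgroup.index_mul_card (Subgroup.normalizer ((P : Subgroup ↥H) : Set ↥H))
  rw [hK, ← h1] at h2
  have h3 : Nat.card (Sylow 7 ↥H) % 7 = 1 % 7 := card_sylow_modEq_one 7 ↥H
  have hbpos : 0 < b := Nat.pos_of_dvd_of_pos hb (by norm_num)
  have hb6 : b ≤ 6 := Nat.le_of_dvd (by norm_num) hb
  rcases (Nat.Prime.eq_one_or_self_of_dvd (by norm_num : Nat.Prime 7) a ha) with rfl | rfl <;>
    rcases hm with h | h <;> rw [h] at h2 <;> interval_cases b <;> omega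

/-- Let `φ` be an embedding of `PSL(3,2) = SL(3,2)` (the simple group of order 168)
into `S_7`. Any subgroup of the image of `φ` that is transitive on the 7 points and
contains an element of order 4 has order 168, i.e. it is the full image of `φ`. -/
theorem psl32_transitive_order_four
    (φ : Matrix.SpecialLinearGroup (Fin 3) (ZMod 2) →* Equiv.Perm (Fin 7))
    (hφ : Function.Injective φ)
    (H : Subgroup (Equiv.Perm (Fin 7))) (hH : H ≤ φ.range)
    (htrans : ∀ x y : Fin 7, ∃ h ∈ H, h x = y)
    (h4 : ∃ g ∈ H, orderOf g = 4) :
    Nat.card H = 168 ∧ H = φ.range := by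
  have hrange : Nat.card φ.range = 168 := by
    rw [← Nat.card_congr (MonoidHom.ofInjective hφ).toEquiv]
    exact cardSL168
  have hdvd : Nat.card H ∣ 168 := by
    rw [← hrange]; exact Subgroup.card_dvd_of_le hH
  have h4d : 4 ∣ Nat.card H := by
    obtain ⟨g, hgH, hg4⟩ := h4
    have hd := orderOf_dvd_natCard (⟨g, hgH⟩ : ↥H)
    rwa [Subgroup.orderOf_mk, hg4] at hd
  have h7d : 7 ∣ Nat.card H := by
    have horb : MulAction.orbit ↥H (0 : Fin 7) = Set.univ := by
      apply Set.eq_univ_of_forall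
      intro y
      obtain ⟨h, hh, hhy⟩ := htrans 0 y
      exact MulAction.mem_orbit_iff.mpr ⟨⟨h, hh⟩, hhy⟩
    have hcard : Nat.card (MulAction.orbit ↥H (0 : Fin 7)) = 7 := by
      rw [horb, Nat.card_congr (Equiv.Set.univ (Fin 7))]
      simp [Nat.card_eq_fintype_card]
    have hq : Nat.card (↥H ⧸ MulAction.stabilizer ↥H (0 : Fin 7)) = 7 := by
      rw [← Nat.card_congr (MulAction.orbitEquivQuotientStabilizer ↥H (0 : Fin 7))]
      exact hcard
    have := Subgroup.index_dvd_card (MulAction.stabilizer ↥H (0 : Fin 7))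
    rwa [Subgroup.index, hq] at this
  have h28 : 28 ∣ Nat.card H :=
    Nat.Coprime.mul_dvd_of_dvd_of_dvd (by norm_num) h4d h7d
  -- candidates
  obtain ⟨k, hk⟩ := h28
  have hk6 : k ∣ 6 := by
    have : 28 * k ∣ 28 * 6 := by rw [← hk]; exact hdvd
    exact (mul_dvd_mul_iff_left (by norm_num : (28:ℕ) ≠ 0)).mp this
  have hcard : Nat.card H = 168 := by
    have hkpos : 0 < k := Nat.pos_of_dvd_of_pos hk6 (by norm_num)
    have hk6' : k ≤ 6 := Nat.le_of_dvd (by norm_num) hk6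
    interval_cases k
    · exact absurd (Or.inl (by omega : Nat.card H = 28)) (fun h => no2884 H hdvd h)
    · exact absurd (by omega : Nat.card H = 56) (fun h => no56 H hdvd h htrans)
    · exact absurd (Or.inr (by omega : Nat.card H = 84)) (fun h => no2884 H hdvd h)
    · norm_num at hk6
    · norm_num at hk6
    · omega
  refine ⟨hcard, ?_⟩
  exact psl_sub_eq hH (by rw [hrange, hcard])
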